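/- arXiv:1601.02997 — 3 statements merged into one kernel-verified Lean document; each statement's English description precedes it below -/
import Mathlib

section
/- If a weakly realizable signed pattern contains three consecutive entries with skip sizes a, b, a (with any signs), then a divides b. -/
/-- A signed pattern is a list of pairs `(ε, a)` with `ε ∈ {1, -1}` and `a` a positive skip size. -/
def IsSignedPattern (p : List (ℤ × ℕ)) : Prop :=
  ∀ e ∈ p, (e.1 = 1 ∨ e.1 = -1) ∧ 0 < e.2

/-- The (signed) sum of the steps of a pattern. -/
def stepSum (p : List (ℤ × ℕ)) : ℤ :=
  (p.map (fun e => e.1 * (e.2 : ℤ))).sum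

/-- The `i`-th term of the pattern started at `T`: `T_i = T + ε₁a₁ + ⋯ + εᵢaᵢ`. -/
def patTerm (T : ℤ) (p : List (ℤ × ℕ)) (i : ℕ) : ℤ :=
  T + stepSum (p.take i)

/-- The pattern `p` is weakly realized starting from `T`: `T` is a nonnegative integer, all terms
are nonnegative, and the left term of each step is an even multiple of its skip size when the
sign is `+1`, and an odd multiple when the sign is `-1`. -/
def WeaklyRealizableFrom (T : ℤ) (p : List (ℤ × ℕ)) : Prop :=
  0 ≤ T ∧ (∀ i, i ≤ p.length → 0 ≤ patTerm T p i) ∧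
    ∀ (i : ℕ) (h : i < p.length),
      ((p.get ⟨i, h⟩).1 = 1 → ∃ k : ℤ, patTerm T p i = 2 * k * ((p.get ⟨i, h⟩).2 : ℤ)) ∧
      ((p.get ⟨i, h⟩).1 = -1 → ∃ k : ℤ, patTerm T p i = (2 * k + 1) * ((p.get ⟨i, h⟩).2 : ℤ))

/-- A pattern is weakly realizable if it is weakly realized from some starting point. -/
def WeaklyRealizable (p : List (ℤ × ℕ)) : Prop :=
  ∃ T : ℤ, WeaklyRealizableFrom T p

/-- A pattern is realizable if it is weakly realized from some starting point in such a way that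
all of its terms `T₀, …, Tₙ` are pairwise distinct. -/
def Realizable (p : List (ℤ × ℕ)) : Prop :=
  ∃ T : ℤ, WeaklyRealizableFrom T p ∧
    ∀ i j : ℕ, i ≤ p.length → j ≤ p.length → i ≠ j → patTerm T p i ≠ patTerm T p j

/-! Whatever its sign, a step with skip size `c` leaves from a multiple of `c`. Weak realizability
passes to consecutive sub-patterns, so in the block `a, b, a` both `Tᵢ` and `Tᵢ₊₂ = Tᵢ ± a ± b` are
multiples of `a`, hence so is `b`. -/

lemma stepSum_append (l₁ l₂ : List (ℤ × ℕ)) : stepSum (l₁ ++ l₂) = stepSum l₁ + stepSum l₂ := by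
  simp [stepSum]

lemma patTerm_append_of_le_length (T : ℤ) (l₁ l₂ : List (ℤ × ℕ)) {i : ℕ} (hi : i ≤ l₁.length) :
    patTerm T (l₁ ++ l₂) i = patTerm T l₁ i := by
  simp [patTerm, List.take_append_of_le_length hi]

lemma patTerm_append_length_add (T : ℤ) (l₁ l₂ : List (ℤ × ℕ)) (i : ℕ) :
    patTerm T (l₁ ++ l₂) (l₁.length + i) = patTerm (T + stepSum l₁) l₂ i := by
  rw [patTerm, patTerm, List.take_length_add_append, stepSum_append, add_assoc]

namespace WeaklyRealizableFrom

variable {T : ℤ} {l₁ l₂ : List (ℤ × ℕ)}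

theorem of_append_left (h : WeaklyRealizableFrom T (l₁ ++ l₂)) : WeaklyRealizableFrom T l₁ := by
  obtain ⟨hT, hnonneg, hstep⟩ := h
  refine ⟨hT, fun i hi => ?_, fun i hi => ?_⟩
  · rw [← patTerm_append_of_le_length T l₁ l₂ hi]
    exact hnonneg i (by simp; omega)
  · simpa [List.getElem_append_left hi, patTerm_append_of_le_length T l₁ l₂ hi.le]
      using hstep i (by simp; omega)

theorem of_append_right (h : WeaklyRealizableFrom T (l₁ ++ l₂)) :
    WeaklyRealizableFrom (T + stepSum l₁) l₂ := by
  obtain ⟨-, hnonneg, hstep⟩ := h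
  have hterm (i : ℕ) := patTerm_append_length_add T l₁ l₂ i
  refine ⟨?_, fun i hi => ?_, fun i hi => ?_⟩
  · simpa [hterm, patTerm] using hnonneg l₁.length (by simp)
  · rw [← hterm]
    exact hnonneg _ (by simp; omega)
  · simpa [hterm] using hstep (l₁.length + i) (by simp; omega)

end WeaklyRealizableFrom

theorem WeaklyRealizable.of_isInfix {l p : List (ℤ × ℕ)} (hl : l <:+: p) (h : WeaklyRealizable p) :
    WeaklyRealizable l := by
  obtain ⟨s, t, rfl⟩ := hl
  obtain ⟨T, hT⟩ := h
  exact ⟨_, hT.of_append_left.of_append_right⟩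

theorem WeaklyRealizableFrom.dvd_patTerm {T : ℤ} {p : List (ℤ × ℕ)} (h : WeaklyRealizableFrom T p)
    {i : ℕ} (hi : i < p.length) (hsign : (p.get ⟨i, hi⟩).1 = 1 ∨ (p.get ⟨i, hi⟩).1 = -1) :
    ((p.get ⟨i, hi⟩).2 : ℤ) ∣ patTerm T p i := by
  obtain ⟨hplus, hminus⟩ := h.2.2 i hi
  rcases hsign with hsign | hsign
  · obtain ⟨k, hk⟩ := hplus hsign
    exact ⟨2 * k, by rw [hk, mul_comm]⟩
  · obtain ⟨k, hk⟩ := hminus hsign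
    exact ⟨2 * k + 1, by rw [hk, mul_comm]⟩

theorem WeaklyRealizable.dvd_of_aba {ε₁ ε₂ ε₃ : ℤ} {a b : ℕ}
    (h₁ : ε₁ = 1 ∨ ε₁ = -1) (h₂ : ε₂ = 1 ∨ ε₂ = -1) (h₃ : ε₃ = 1 ∨ ε₃ = -1)
    (h : WeaklyRealizable [(ε₁, a), (ε₂, b), (ε₃, a)]) : a ∣ b := by
  obtain ⟨T, hT⟩ := h
  have hstart : (a : ℤ) ∣ T := by
    simpa [patTerm, stepSum] using hT.dvd_patTerm (i := 0) (by simp) h₁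
  have hend : (a : ℤ) ∣ T + ε₁ * a + ε₂ * b := by
    simpa [patTerm, stepSum, add_assoc] using hT.dvd_patTerm (i := 2) (by simp) h₃
  have hmid : (a : ℤ) ∣ ε₂ * b :=
    (Int.dvd_add_right (hstart.add (dvd_mul_left _ _))).mp hend
  have hunit : IsUnit ε₂ := by rcases h₂ with rfl | rfl <;> simp
  exact Int.natCast_dvd_natCast.mp (hunit.dvd_mul_left.mp hmid)

/-- If a weakly realizable signed pattern contains three consecutive entries with skip sizes
`a, b, a` (with any signs), then `a ∣ b`. -/
theorem aba_implies_dvd (l₁ l₂ : List (ℤ × ℕ)) (ε₁ ε₂ ε₃ : ℤ) (a b : ℕ)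
    (hp : IsSignedPattern (l₁ ++ [(ε₁, a), (ε₂, b), (ε₃, a)] ++ l₂))
    (h : WeaklyRealizable (l₁ ++ [(ε₁, a), (ε₂, b), (ε₃, a)] ++ l₂)) :
    a ∣ b := by
  have sign_of_mem (e : ℤ × ℕ) (he : e ∈ [(ε₁, a), (ε₂, b), (ε₃, a)]) : e.1 = 1 ∨ e.1 = -1 :=
    (hp e (List.mem_append_left _ (List.mem_append_right _ he))).1
  exact (h.of_isInfix ⟨l₁, l₂, rfl⟩).dvd_of_aba (sign_of_mem (ε₁, a) (by simp))
    (sign_of_mem (ε₂, b) (by simp)) (sign_of_mem (ε₃, a) (by simp))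
end

section
/- Let a, b, c be positive integers with a > b and a > c. Then no signed pattern with skip sizes a, b, c, a (in this order, with any signs) is realizable; that is, there is no choice of signs ε₁, ε₂, ε₃, ε₄ and starting point T making the signed pattern (ε₁a, ε₂b, ε₃c, ε₄a) weakly realizable with its five terms T₀, …, T₄ pairwise distinct. -/
/-!
Since `a` divides both `T₀` and `T₃`, it divides `ε₂b + ε₃c`, which lies strictly between `-2a`
and `2a`. As `T₁ ≠ T₃` and `T₀ ≠ T₃`, this forces `ε₁ = ε₂ = ε₃` and `a = b + c`.
With a common sign, every step turns an even multiple of its skip size into an odd multiple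
(sign `+1`) or an odd one into an even one (sign `-1`). Reading `T₁` and `T₂` as multiples of two
consecutive skip sizes then orders the 2-adic valuations strictly: `v(c) < v(b) < v(a)`, resp.
`v(a) < v(b) < v(c)`. Both orders are incompatible with `a = b + c` by the ultrametric inequality.
-/

@[simp]
lemma patTerm_zero (T : ℤ) (p : List (ℤ × ℕ)) : patTerm T p 0 = T := by
  simp [patTerm, stepSum]

@[simp]
lemma patTerm_cons_succ (T : ℤ) (e : ℤ × ℕ) (p : List (ℤ × ℕ)) (i : ℕ) :
    patTerm T (e :: p) (i + 1) = patTerm (T + e.1 * e.2) p i := by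
  simp [patTerm, stepSum, add_assoc]

lemma patTerm_take (T : ℤ) (p : List (ℤ × ℕ)) {n i : ℕ} (hi : i ≤ n) :
    patTerm T (p.take n) i = patTerm T p i := by
  simp [patTerm, List.take_take, min_eq_left hi]

namespace WeaklyRealizableFrom

variable {T : ℤ} {p : List (ℤ × ℕ)}

lemma take (h : WeaklyRealizableFrom T p) (n : ℕ) : WeaklyRealizableFrom T (p.take n) := by
  obtain ⟨hT, hnonneg, hstep⟩ := h
  refine ⟨hT, fun i hi => ?_, fun i hi => ?_⟩
  · rw [List.length_take, le_min_iff] at hi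
    rw [patTerm_take T p hi.1]
    exact hnonneg i hi.2
  · rw [List.length_take, lt_min_iff] at hi
    simpa [patTerm_take T p hi.1.le] using hstep i hi.2

lemma exists_even_mul (h : WeaklyRealizableFrom T p) {i : ℕ} (hi : i < p.length)
    (hε : p[i].1 = 1) : ∃ k : ℤ, Even k ∧ patTerm T p i = k * p[i].2 := by
  obtain ⟨k, hk⟩ := (h.2.2 i hi).1 hε
  exact ⟨2 * k, even_two_mul k, hk⟩

lemma exists_odd_mul (h : WeaklyRealizableFrom T p) {i : ℕ} (hi : i < p.length)
    (hε : p[i].1 = -1) : ∃ k : ℤ, Odd k ∧ patTerm T p i = k * p[i].2 := by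
  obtain ⟨k, hk⟩ := (h.2.2 i hi).2 hε
  exact ⟨2 * k + 1, odd_two_mul_add_one k, hk⟩

lemma dvd_patTerm_s17 (h : WeaklyRealizableFrom T p) {i : ℕ} (hi : i < p.length)
    (hε : p[i].1 = 1 ∨ p[i].1 = -1) : (p[i].2 : ℤ) ∣ patTerm T p i := by
  rcases hε with hε | hε
  · obtain ⟨k, -, hk⟩ := h.exists_even_mul hi hε
    exact ⟨k, hk.trans (mul_comm _ _)⟩
  · obtain ⟨k, -, hk⟩ := h.exists_odd_mul hi hε
    exact ⟨k, hk.trans (mul_comm _ _)⟩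

end WeaklyRealizableFrom

lemma padicValInt_lt_add_of_lt {p : ℕ} [Fact p.Prime] {q r₁ r₂ : ℤ} (hr : r₁ + r₂ ≠ 0)
    (h₁ : padicValInt p q < padicValInt p r₁) (h₂ : padicValInt p q < padicValInt p r₂) :
    padicValInt p q < padicValInt p (r₁ + r₂) := by
  have := padicValRat.lt_add_of_lt (p := p) (q := q) (r₁ := r₁) (r₂ := r₂) (by exact_mod_cast hr)
    (by simpa only [padicValRat.of_int, Nat.cast_lt] using h₁)
    (by simpa only [padicValRat.of_int, Nat.cast_lt] using h₂)
  rwa [← Int.cast_add, padicValRat.of_int, padicValRat.of_int, Nat.cast_lt] at this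

lemma padicValInt_two_lt_of_odd_mul_eq_even_mul {a b k l : ℤ} (ha : a ≠ 0) (hk : Odd k)
    (hl : Even l) (h : k * a = l * b) : padicValInt 2 b < padicValInt 2 a := by
  have hk0 : k ≠ 0 := by rintro rfl; simp at hk
  have hl0 : l ≠ 0 := by rintro rfl; simp_all
  have hb0 : b ≠ 0 := by rintro rfl; simp_all
  have hvk : padicValInt 2 k = 0 :=
    padicValInt.eq_zero_of_not_dvd (by simpa [← even_iff_two_dvd] using hk)
  have hvl : 1 ≤ padicValInt 2 l :=
    ((padicValInt_dvd_iff 1 l).1 (by simpa [← even_iff_two_dvd] using hl)).resolve_left hl0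
  have hv := congrArg (padicValInt 2) h
  rw [padicValInt.mul hk0 ha, padicValInt.mul hl0 hb0] at hv
  omega

lemma not_weaklyRealizable_of_add_eq {a b c : ℕ} {ε : ℤ} (hε : ε = 1 ∨ ε = -1) (hb : 0 < b)
    (hc : 0 < c) (habc : b + c = a) : ¬ WeaklyRealizable [(ε, a), (ε, b), (ε, c)] := by
  rintro ⟨T, hT⟩
  rcases hε with rfl | rfl
  · obtain ⟨k₀, hk₀, hT₀⟩ := hT.exists_even_mul (i := 0) (by simp) rfl
    obtain ⟨k₁, hk₁, hT₁⟩ := hT.exists_even_mul (i := 1) (by simp) rfl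
    obtain ⟨k₂, hk₂, hT₂⟩ := hT.exists_even_mul (i := 2) (by simp) rfl
    simp only [patTerm_zero, patTerm_cons_succ, List.getElem_cons_zero, List.getElem_cons_succ]
      at hT₀ hT₁ hT₂
    have hab : padicValInt 2 b < padicValInt 2 a :=
      padicValInt_two_lt_of_odd_mul_eq_even_mul (by omega) hk₀.add_one hk₁
        (by linear_combination hT₁ - hT₀)
    have hbc : padicValInt 2 c < padicValInt 2 b :=
      padicValInt_two_lt_of_odd_mul_eq_even_mul (by omega) hk₁.add_one hk₂
        (by linear_combination hT₂ - hT₁)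
    have := padicValInt_lt_add_of_lt (q := c) (r₁ := a) (r₂ := -b) (by omega) (hbc.trans hab)
      (by simpa [padicValInt] using hbc)
    simp [← habc] at this
  · obtain ⟨k₀, hk₀, hT₀⟩ := hT.exists_odd_mul (i := 0) (by simp) rfl
    obtain ⟨k₁, hk₁, hT₁⟩ := hT.exists_odd_mul (i := 1) (by simp) rfl
    obtain ⟨k₂, hk₂, hT₂⟩ := hT.exists_odd_mul (i := 2) (by simp) rfl
    simp only [patTerm_zero, patTerm_cons_succ, List.getElem_cons_zero, List.getElem_cons_succ]
      at hT₀ hT₁ hT₂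
    have hab : padicValInt 2 a < padicValInt 2 b :=
      padicValInt_two_lt_of_odd_mul_eq_even_mul (by omega) hk₁ (hk₀.sub_odd odd_one)
        (by linear_combination hT₀ - hT₁)
    have hbc : padicValInt 2 b < padicValInt 2 c :=
      padicValInt_two_lt_of_odd_mul_eq_even_mul (by omega) hk₂ (hk₁.sub_odd odd_one)
        (by linear_combination hT₁ - hT₂)
    have := padicValInt_lt_add_of_lt (q := a) (r₁ := b) (r₂ := c) (by omega) hab (hab.trans hbc)
    simp [← habc] at this

lemma signs_eq_and_add_eq_of_dvd {a b c ε₁ ε₂ ε₃ : ℤ} (hb : 0 ≤ b) (hc : 0 ≤ c) (hba : b < a)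
    (hca : c < a) (h₁ : ε₁ = 1 ∨ ε₁ = -1) (h₂ : ε₂ = 1 ∨ ε₂ = -1) (h₃ : ε₃ = 1 ∨ ε₃ = -1)
    (hdvd : a ∣ ε₂ * b + ε₃ * c) (h₁₃ : ε₂ * b + ε₃ * c ≠ 0)
    (h₀₃ : ε₁ * a + ε₂ * b + ε₃ * c ≠ 0) : ε₂ = ε₁ ∧ ε₃ = ε₁ ∧ b + c = a := by
  obtain ⟨k, hk⟩ := hdvd
  have hbound : -2 * a < a * k ∧ a * k < 2 * a := by
    rcases h₂ with rfl | rfl <;> rcases h₃ with rfl | rfl <;> omega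
  have hk₁ : -2 < k := by nlinarith
  have hk₂ : k < 2 := by nlinarith
  interval_cases k <;> rcases h₁ with rfl | rfl <;> rcases h₂ with rfl | rfl <;>
    rcases h₃ with rfl | rfl <;> omega

theorem abca_forbidden_general (a b c : ℕ)
    (hba : b < a) (hca : c < a) (ε₁ ε₂ ε₃ ε₄ : ℤ)
    (h₁ : ε₁ = 1 ∨ ε₁ = -1) (h₂ : ε₂ = 1 ∨ ε₂ = -1)
    (h₃ : ε₃ = 1 ∨ ε₃ = -1) (h₄ : ε₄ = 1 ∨ ε₄ = -1) :
    ¬ Realizable [(ε₁, a), (ε₂, b), (ε₃, c), (ε₄, a)] := by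
  rintro ⟨T, hT, hdist⟩
  have h₀₃ := hdist 0 3 (by simp) (by simp) (by decide)
  have h₁₃ := hdist 1 3 (by simp) (by simp) (by decide)
  have hd₀ := hT.dvd_patTerm_s17 (i := 0) (by simp) h₁
  have hd₃ := hT.dvd_patTerm_s17 (i := 3) (by simp) h₄
  simp only [patTerm_zero, patTerm_cons_succ, List.getElem_cons_zero, List.getElem_cons_succ]
    at h₀₃ h₁₃ hd₀ hd₃
  obtain ⟨rfl, rfl, habc⟩ := signs_eq_and_add_eq_of_dvd (a := a) (b := b) (c := c) (by positivity)
    (by positivity) (by exact_mod_cast hba) (by exact_mod_cast hca) h₁ h₂ h₃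
    ((dvd_add_right (hd₀.add (dvd_mul_left _ ε₁))).1 (by rwa [add_assoc] at hd₃))
    (fun h => h₁₃ (by linear_combination -h)) (fun h => h₀₃ (by linear_combination -h))
  exact not_weaklyRealizable_of_add_eq (a := a) (b := b) (c := c) h₁ (by omega) (by omega)
    (by exact_mod_cast habc)
    ⟨T, by simpa using hT.take 3⟩

/-- If `a > b` and `a > c`, then no signed pattern with skip sizes `a, b, c, a` in this order
is realizable. -/
theorem abca_forbidden (a b c : ℕ) (ha : 0 < a) (hb : 0 < b) (hc : 0 < c)
    (hba : b < a) (hca : c < a) (ε₁ ε₂ ε₃ ε₄ : ℤ)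
    (h₁ : ε₁ = 1 ∨ ε₁ = -1) (h₂ : ε₂ = 1 ∨ ε₂ = -1)
    (h₃ : ε₃ = 1 ∨ ε₃ = -1) (h₄ : ε₄ = 1 ∨ ε₄ = -1) :
    ¬ Realizable [(ε₁, a), (ε₂, b), (ε₃, c), (ε₄, a)] :=
  abca_forbidden_general a b c hba hca ε₁ ε₂ ε₃ ε₄ h₁ h₂ h₃ h₄
end

section
/- Let a, b, c be pairwise distinct positive integers. Then for every choice of signs ε₁, …, ε₇ ∈ {+1, −1}, the signed pattern with skip sizes b, a, c, a, b, a, c in this order, i.e. (ε₁b, ε₂a, ε₃c, ε₄a, ε₅b, ε₆a, ε₇c), is not weakly realizable. -/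
def IsSkip (s x y : ℤ) : Prop :=
  (2 * s ∣ x ∧ y = x + s) ∨ (2 * s ∣ y ∧ x = y + s)

theorem isSkip_add_mul {ε s x : ℤ} (hε : ε = 1 ∨ ε = -1) (hpos : ε = 1 → ∃ k, x = 2 * k * s)
    (hneg : ε = -1 → ∃ k, x = (2 * k + 1) * s) : IsSkip s x (x + ε * s) := by
  rcases hε with rfl | rfl
  · obtain ⟨k, rfl⟩ := hpos rfl
    exact .inl ⟨⟨k, by ring⟩, by ring⟩
  · obtain ⟨k, rfl⟩ := hneg rfl
    exact .inr ⟨⟨k, by ring⟩, by ring⟩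

theorem patTerm_succ (T : ℤ) {p : List (ℤ × ℕ)} {i : ℕ} (hi : i < p.length) :
    patTerm T p (i + 1) = patTerm T p i + p[i].1 * p[i].2 := by
  simp only [patTerm, stepSum, List.take_add_one, List.getElem?_eq_getElem hi, Option.toList_some,
    List.map_append, List.sum_append, List.map_singleton, List.sum_singleton, add_assoc]

theorem WeaklyRealizableFrom.isSkip {T : ℤ} {p : List (ℤ × ℕ)} (hp : WeaklyRealizableFrom T p)
    (hsign : ∀ e ∈ p, e.1 = 1 ∨ e.1 = -1) {i : ℕ} (hi : i < p.length) :
    IsSkip p[i].2 (patTerm T p i) (patTerm T p (i + 1)) := by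
  rw [patTerm_succ T hi]
  exact isSkip_add_mul (hsign _ (List.getElem_mem hi)) (hp.2.2 i hi).1 (hp.2.2 i hi).2

namespace IsSkip

variable {s x y : ℤ}

theorem symm (h : IsSkip s x y) : IsSkip s y x :=
  Or.symm h

theorem dvd_left (h : IsSkip s x y) : s ∣ x := by
  rcases h with ⟨hx, -⟩ | ⟨hy, rfl⟩
  · exact (dvd_mul_left s 2).trans hx
  · exact ((dvd_mul_left s 2).trans hy).add dvd_rfl

theorem dvd_right (h : IsSkip s x y) : s ∣ y :=
  h.symm.dvd_left

theorem dvd_size {d : ℤ} (h : IsSkip s x y) (hx : d ∣ x) (hy : d ∣ y) : d ∣ s := by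
  rcases h with ⟨-, rfl⟩ | ⟨-, rfl⟩
  · exact (dvd_add_right hx).1 hy
  · exact (dvd_add_right hy).1 hx

theorem even_or_even (h : IsSkip s x y) : Even x ∨ Even y := by
  rcases h with ⟨hx, -⟩ | ⟨hy, -⟩
  · exact .inl (hx.even (even_two_mul s))
  · exact .inr (hy.even (even_two_mul s))

theorem eq_add_of_even (hs : Odd s) (h : IsSkip s x y) (hx : Even x) : y = x + s ∧ Odd y := by
  rcases h with ⟨-, rfl⟩ | ⟨hy, rfl⟩
  · exact ⟨rfl, hx.add_odd hs⟩
  · exact absurd hx (Int.not_even_iff_odd.2 ((hy.even (even_two_mul s)).add_odd hs))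

theorem eq_sub_of_odd (h : IsSkip s x y) (hx : Odd x) : y = x - s ∧ Even y := by
  rcases h with ⟨hx', -⟩ | ⟨hy, rfl⟩
  · exact absurd (hx'.even (even_two_mul s)) (Int.not_even_iff_odd.2 hx)
  · exact ⟨by ring, hy.even (even_two_mul s)⟩

end IsSkip

theorem isSkip_mul_iff {a s x y : ℤ} (ha : a ≠ 0) :
    IsSkip (a * s) (a * x) (a * y) ↔ IsSkip s x y := by
  simp only [IsSkip, mul_left_comm 2 a, mul_dvd_mul_iff_left ha, ← mul_add, mul_right_inj' ha]

theorem IsSkip.odd_of_dvd_ends {r s x y z w : ℤ} (h₁ : IsSkip 1 x y) (h₂ : IsSkip r y z)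
    (h₃ : IsSkip 1 z w) (hx : s ∣ x) (hw : s ∣ w) : Odd s := by
  by_contra hs
  replace hs := Int.not_odd_iff_even.1 hs
  have hy := (h₁.eq_add_of_even odd_one (hx.even hs)).2
  have hz := (h₃.symm.eq_add_of_even odd_one (hw.even hs)).2
  rcases h₂.even_or_even with h | h
  · exact Int.not_even_iff_odd.2 hy h
  · exact Int.not_even_iff_odd.2 hz h

theorem IsSkip.add_sub_two_eq {B C x₀ x₁ x₂ x₃ x₄ : ℤ} (hB : Odd B) (hC : Odd C)
    (h₁ : IsSkip B x₀ x₁) (h₂ : IsSkip 1 x₁ x₂) (h₃ : IsSkip C x₂ x₃) (h₄ : IsSkip 1 x₃ x₄) :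
    B + C - 2 = x₄ - x₀ ∨ B + C - 2 = x₀ - x₄ := by
  rcases Int.even_or_odd x₀ with h₀ | h₀
  · obtain ⟨rfl, o₁⟩ := h₁.eq_add_of_even hB h₀
    obtain ⟨rfl, e₂⟩ := h₂.eq_sub_of_odd o₁
    obtain ⟨rfl, o₃⟩ := h₃.eq_add_of_even hC e₂
    obtain ⟨rfl, -⟩ := h₄.eq_sub_of_odd o₃
    left; ring
  · obtain ⟨rfl, e₁⟩ := h₁.eq_sub_of_odd h₀
    obtain ⟨rfl, o₂⟩ := h₂.eq_add_of_even odd_one e₁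
    obtain ⟨rfl, e₃⟩ := h₃.eq_sub_of_odd o₂
    obtain ⟨rfl, -⟩ := h₄.eq_add_of_even odd_one e₃
    right; ring

theorem two_mul_dvd_add_sub_two {B C x₀ x₁ x₂ x₃ x₄ x₅ : ℤ} (hB : Odd B) (hC : Odd C)
    (h₁ : IsSkip B x₀ x₁) (h₂ : IsSkip 1 x₁ x₂) (h₃ : IsSkip C x₂ x₃) (h₄ : IsSkip 1 x₃ x₄)
    (h₅ : IsSkip B x₄ x₅) : 2 * B ∣ B + C - 2 := by
  have hdvd : B ∣ B + C - 2 := by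
    rcases IsSkip.add_sub_two_eq hB hC h₁ h₂ h₃ h₄ with h | h <;> rw [h]
    exacts [dvd_sub h₅.dvd_left h₁.dvd_left, dvd_sub h₁.dvd_left h₅.dvd_left]
  have heven : Even (B + C - 2) := (hB.add_odd hC).sub even_two
  exact (Int.isCoprime_two_left.2 hB).mul_dvd (even_iff_two_dvd.1 heven) hdvd

theorem false_of_isSkip_bacabac_one {B C t₀ t₁ t₂ t₃ t₄ t₅ t₆ t₇ : ℤ} (hB : 1 < B) (hC : 0 < C)
    (h₁ : IsSkip B t₀ t₁) (h₂ : IsSkip 1 t₁ t₂) (h₃ : IsSkip C t₂ t₃) (h₄ : IsSkip 1 t₃ t₄)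
    (h₅ : IsSkip B t₄ t₅) (h₆ : IsSkip 1 t₅ t₆) (h₇ : IsSkip C t₆ t₇) : False := by
  have hBodd : Odd B := IsSkip.odd_of_dvd_ends h₂ h₃ h₄ h₁.dvd_right h₅.dvd_left
  have hCodd : Odd C := IsSkip.odd_of_dvd_ends h₄ h₅ h₆ h₃.dvd_right h₇.dvd_left
  have h2B := two_mul_dvd_add_sub_two hBodd hCodd h₁ h₂ h₃ h₄ h₅
  have h2C := two_mul_dvd_add_sub_two hCodd hBodd h₃ h₄ h₅ h₆ h₇
  have := Int.le_of_dvd (by omega) h2B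
  have := Int.le_of_dvd (by omega) h2C
  omega

theorem false_of_isSkip_bacabac {a b c t₀ t₁ t₂ t₃ t₄ t₅ t₆ t₇ : ℤ} (ha : 0 < a) (hb : 0 < b)
    (hc : 0 < c) (hab : a ≠ b)
    (h₁ : IsSkip b t₀ t₁) (h₂ : IsSkip a t₁ t₂) (h₃ : IsSkip c t₂ t₃) (h₄ : IsSkip a t₃ t₄)
    (h₅ : IsSkip b t₄ t₅) (h₆ : IsSkip a t₅ t₆) (h₇ : IsSkip c t₆ t₇) : False := by
  obtain ⟨B, rfl⟩ := h₅.dvd_size h₄.dvd_right h₆.dvd_left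
  obtain ⟨C, rfl⟩ := h₃.dvd_size h₂.dvd_right h₄.dvd_left
  have hB : 1 < B := by
    have : B ≠ 1 := by rintro rfl; exact hab (mul_one a).symm
    have := pos_of_mul_pos_right hb ha.le
    omega
  obtain ⟨t₀, rfl⟩ := (dvd_mul_right a B).trans h₁.dvd_left
  obtain ⟨t₁, rfl⟩ := h₂.dvd_left
  obtain ⟨t₂, rfl⟩ := h₂.dvd_right
  obtain ⟨t₃, rfl⟩ := h₄.dvd_left
  obtain ⟨t₄, rfl⟩ := h₄.dvd_right
  obtain ⟨t₅, rfl⟩ := h₆.dvd_left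
  obtain ⟨t₆, rfl⟩ := h₆.dvd_right
  obtain ⟨t₇, rfl⟩ := (dvd_mul_right a C).trans h₇.dvd_right
  have unscale {s x y : ℤ} (h : IsSkip (a * s) (a * x) (a * y)) : IsSkip s x y :=
    (isSkip_mul_iff ha.ne').1 h
  have unscale_one {x y : ℤ} (h : IsSkip a (a * x) (a * y)) : IsSkip 1 x y :=
    unscale (by rwa [mul_one])
  exact false_of_isSkip_bacabac_one hB (pos_of_mul_pos_right hc ha.le) (unscale h₁)
    (unscale_one h₂) (unscale h₃) (unscale_one h₄) (unscale h₅) (unscale_one h₆) (unscale h₇)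

theorem bacabac_forbidden_general (a b c : ℕ) (ha : 0 < a) (hb : 0 < b) (hc : 0 < c)
    (hab : a ≠ b)
    (ε₁ ε₂ ε₃ ε₄ ε₅ ε₆ ε₇ : ℤ)
    (h₁ : ε₁ = 1 ∨ ε₁ = -1) (h₂ : ε₂ = 1 ∨ ε₂ = -1) (h₃ : ε₃ = 1 ∨ ε₃ = -1)
    (h₄ : ε₄ = 1 ∨ ε₄ = -1) (h₅ : ε₅ = 1 ∨ ε₅ = -1) (h₆ : ε₆ = 1 ∨ ε₆ = -1)
    (h₇ : ε₇ = 1 ∨ ε₇ = -1) :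
    ¬ WeaklyRealizable
      [(ε₁, b), (ε₂, a), (ε₃, c), (ε₄, a), (ε₅, b), (ε₆, a), (ε₇, c)] := by
  rintro ⟨T, hT⟩
  have h (i : ℕ) (hi : i < 7) := hT.isSkip (by simp [h₁, h₂, h₃, h₄, h₅, h₆, h₇]) hi
  exact false_of_isSkip_bacabac (mod_cast ha) (mod_cast hb) (mod_cast hc) (mod_cast hab)
    (h 0 (by simp)) (h 1 (by simp)) (h 2 (by simp)) (h 3 (by simp)) (h 4 (by simp))
    (h 5 (by simp)) (h 6 (by simp))

/-- For pairwise distinct positive `a, b, c`, the signed pattern with skip sizes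
`b, a, c, a, b, a, c` in this order is not weakly realizable, for any choice of signs. -/
theorem bacabac_forbidden (a b c : ℕ) (ha : 0 < a) (hb : 0 < b) (hc : 0 < c)
    (hab : a ≠ b) (hac : a ≠ c) (hbc : b ≠ c)
    (ε₁ ε₂ ε₃ ε₄ ε₅ ε₆ ε₇ : ℤ)
    (h₁ : ε₁ = 1 ∨ ε₁ = -1) (h₂ : ε₂ = 1 ∨ ε₂ = -1) (h₃ : ε₃ = 1 ∨ ε₃ = -1)
    (h₄ : ε₄ = 1 ∨ ε₄ = -1) (h₅ : ε₅ = 1 ∨ ε₅ = -1) (h₆ : ε₆ = 1 ∨ ε₆ = -1)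
    (h₇ : ε₇ = 1 ∨ ε₇ = -1) :
    ¬ WeaklyRealizable
      [(ε₁, b), (ε₂, a), (ε₃, c), (ε₄, a), (ε₅, b), (ε₆, a), (ε₇, c)] :=
  bacabac_forbidden_general a b c ha hb hc hab ε₁ ε₂ ε₃ ε₄ ε₅ ε₆ ε₇ h₁ h₂ h₃ h₄ h₅ h₆ h₇
end
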